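/- Stationarity of the iterated local-solution times: under assumption [H], define recursively γ₀=0 and γ_n=θ_{γ_{n−1}}, where θ_τ is the stopping time from the local solution BL(ξ,g,L,U) associated with the stopping time τ. Then for every n≥1, P[(γ_{n−1}=γ_n)∩(γ_n<T)]=0, and the sequence (γ_n) is of stationary type, i.e. P[γ_n<T for all n≥1]=0. -/

import Mathlib

open MeasureTheory ProbabilityTheory Filter Set Function
open scoped ENNReal NNReal Classical

noncomputable section

namespace DRBSDE

/-- The mark space `E = ℝ^l \ {0}` of the Poisson random measure. -/
abbrev Marks (l : ℕ) := {x : Fin l → ℝ // x ≠ 0}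

/-- A real function is rcll (right continuous with left limits) on `[0,T]`. -/
def RCLLOn (f : ℝ → ℝ) (T : ℝ) : Prop :=
  (∀ t ∈ Set.Ico (0 : ℝ) T, ContinuousWithinAt f (Set.Ici t) t) ∧
  (∀ t ∈ Set.Ioc (0 : ℝ) T, ∃ c : ℝ, Filter.Tendsto f (nhdsWithin t (Set.Iio t)) (nhds c))

/-- Freeze a path outside of `[0,T]`. -/
def clamp (T : ℝ) (f : ℝ → ℝ) : ℝ → ℝ := fun s => f (max 0 (min s T))

/-- The Lebesgue-Stieltjes measure `dK` associated with a nondecreasing right-continuous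
function (junk value `0` otherwise). -/
def lsMeasure (g : ℝ → ℝ) : Measure ℝ :=
  if h : Monotone g ∧ ∀ x, ContinuousWithinAt g (Set.Ici x) x then
    StieltjesFunction.measure ⟨g, h.1, h.2⟩
  else 0

/-- The jump `Δf_t = f_t - f_{t-}` of a path at time `t`. -/
def jump (f : ℝ → ℝ) (t : ℝ) : ℝ := f t - Function.leftLim f t

/-- The sum of the jumps of a path over `(0,t]`; for an rcll nondecreasing function this is
its purely discontinuous part `K^d`. -/
def jumpPart (f : ℝ → ℝ) (t : ℝ) : ℝ := ∑' s : {s : ℝ // 0 < s ∧ s ≤ t}, jump f s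

/-- The continuous part `K^c = K - K^d` of an rcll nondecreasing function. -/
def contPart (f : ℝ → ℝ) : ℝ → ℝ := fun t => f t - jumpPart f t

/-- The stochastic basis of the paper: a complete right-continuous filtered probability space
on the horizon `[0,T]`, carrying a `d`-dimensional Brownian motion `B` and an independent
Poisson random measure `pm` on `ℝ⁺ × E`, `E = ℝ^l \ {0}`, with compensator `dt λ(de)`,
which together generate the filtration.  It also carries the two stochastic integral
operators `intB Z s t = ∫_s^t Z_r dB_r` and `intN V s t = ∫_s^t ∫_E V_r(e) μ̃(dr,de)`
(with `μ̃ = μ - ν` the compensated measure), characterized by their elementary values,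
the Chasles relation, the martingale property and the Itô isometry. -/
structure Setting (Ω : Type) [mΩ : MeasurableSpace Ω] (d l : ℕ) where
  P : Measure Ω
  instP : IsProbabilityMeasure P
  T : ℝ
  hT : 0 < T
  F : Filtration ℝ mΩ
  /-- usual conditions: right continuity of the filtration -/
  usual_right : ∀ t : ℝ, F t = ⨅ (ε : ℝ) (_ : 0 < ε), F (t + ε)
  /-- usual conditions: `F_t` contains all `P`-null sets -/
  usual_complete : ∀ (t : ℝ) (N : Set Ω), P N = 0 → MeasurableSet[F t] N
  /-- the `d`-dimensional Brownian motion -/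
  B : ℝ → Ω → Fin d → ℝ
  B_zero : ∀ ω, B 0 ω = 0
  B_cont : ∀ ω, Continuous fun t => B t ω
  B_adapted : ∀ t : ℝ, Measurable[F t] (B t)
  B_incr_indep : ∀ s t : ℝ, 0 ≤ s → s ≤ t →
    Indep (MeasurableSpace.comap (fun ω => B t ω - B s ω) inferInstance) (F s) P
  B_incr_gaussian : ∀ (s t : ℝ) (i : Fin d), 0 ≤ s → s ≤ t →
    P.map (fun ω => B t ω i - B s ω i) = gaussianReal 0 (Real.toNNReal (t - s))
  B_coord_indep : ∀ (s t : ℝ) (i j : Fin d), i ≠ j →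
    IndepFun (fun ω => B t ω i - B s ω i) (fun ω => B t ω j - B s ω j) P
  /-- the intensity measure `λ` on the mark space -/
  lam : Measure (Marks l)
  lam_sf : SigmaFinite lam
  lam_int : ∫⁻ e : Marks l, ENNReal.ofReal (min 1 (‖(e : Fin l → ℝ)‖ ^ 2)) ∂lam ≠ ∞
  /-- the Poisson random measure `μ(ω, ·)` on `ℝ⁺ × E` -/
  pm : Ω → Measure (ℝ × Marks l)
  pm_meas : ∀ (A : Set (ℝ × Marks l)), MeasurableSet A → Measurable fun ω => pm ω A
  /-- `μ((a,b] × A)` is Poisson distributed with parameter `(b-a) λ(A)` -/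
  pm_poisson : ∀ (a b : ℝ) (A : Set (Marks l)), 0 ≤ a → a ≤ b → MeasurableSet A →
    lam A ≠ ∞ → ∀ k : ℕ,
      P {ω | pm ω (Set.Ioc a b ×ˢ A) = (k : ℝ≥0∞)} =
        ENNReal.ofReal (Real.exp (-((b - a) * (lam A).toReal)) *
          ((b - a) * (lam A).toReal) ^ k / (Nat.factorial k))
  pm_indep : ∀ (A₁ A₂ : Set (ℝ × Marks l)), MeasurableSet A₁ → MeasurableSet A₂ →
    Disjoint A₁ A₂ → IndepFun (fun ω => pm ω A₁) (fun ω => pm ω A₂) P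
  pm_adapted : ∀ (t : ℝ) (A : Set (Marks l)), MeasurableSet A →
    Measurable[F t] fun ω => pm ω (Set.Ioc 0 t ×ˢ A)
  pm_incr_indep : ∀ (s t : ℝ) (A : Set (Marks l)), 0 ≤ s → s ≤ t → MeasurableSet A →
    Indep (MeasurableSpace.comap (fun ω => pm ω (Set.Ioc s t ×ˢ A)) inferInstance) (F s) P
  /-- mutual independence of the Brownian motion and the Poisson random measure -/
  B_pm_indep : Indep
    (MeasurableSpace.comap (fun ω => fun t => B t ω) MeasurableSpace.pi)
    (MeasurableSpace.comap pm inferInstance) P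
  /-- the filtration is the completed natural filtration of `B` and `μ` -/
  F_generated : ∀ t : ℝ, 0 ≤ t → t ≤ T → F t = MeasurableSpace.generateFrom
    ({s | ∃ u : ℝ, 0 ≤ u ∧ u ≤ t ∧ ∃ A : Set (Fin d → ℝ), MeasurableSet A ∧ s = B u ⁻¹' A} ∪
     {s | ∃ u : ℝ, 0 ≤ u ∧ u ≤ t ∧ ∃ A : Set (Marks l), MeasurableSet A ∧
        ∃ k : ℕ, s = {ω | pm ω (Set.Ioc 0 u ×ˢ A) = (k : ℝ≥0∞)}} ∪
     {s | P s = 0})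
  /-- the Brownian stochastic integral `∫_s^t Z_r dB_r` -/
  intB : (ℝ → Ω → Fin d → ℝ) → ℝ → ℝ → Ω → ℝ
  /-- the compensated Poisson stochastic integral `∫_s^t ∫_E V_r(e) μ̃(dr,de)` -/
  intN : (ℝ → Ω → Marks l → ℝ) → ℝ → ℝ → Ω → ℝ
  intB_chasles : ∀ (Z : ℝ → Ω → Fin d → ℝ) (r s t : ℝ), r ≤ s → s ≤ t →
    ∀ᵐ ω ∂P, intB Z r t ω = intB Z r s ω + intB Z s t ω
  intN_chasles : ∀ (V : ℝ → Ω → Marks l → ℝ) (r s t : ℝ), r ≤ s → s ≤ t →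
    ∀ᵐ ω ∂P, intN V r t ω = intN V r s ω + intN V s t ω
  intB_const : ∀ (z : Fin d → ℝ) (s t : ℝ), ∀ᵐ ω ∂P,
    intB (fun _ _ => z) s t ω = ∑ i, z i * (B t ω i - B s ω i)
  intB_martingale : ∀ Z : ℝ → Ω → Fin d → ℝ, ProgMeasurable F Z →
    (∫⁻ ω, ∫⁻ s in Set.Icc 0 T, ENNReal.ofReal (‖Z s ω‖ ^ 2) ∂volume ∂P ≠ ∞) →
    Martingale (fun t ω => intB Z 0 t ω) F P
  intB_isometry : ∀ Z : ℝ → Ω → Fin d → ℝ, ProgMeasurable F Z →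
    (∫⁻ ω, ∫⁻ s in Set.Icc 0 T, ENNReal.ofReal (‖Z s ω‖ ^ 2) ∂volume ∂P ≠ ∞) →
    ∀ t ∈ Set.Icc 0 T,
      ∫⁻ ω, ENNReal.ofReal ((intB Z 0 t ω) ^ 2) ∂P
        = ∫⁻ ω, ∫⁻ s in Set.Icc 0 t, ENNReal.ofReal (‖Z s ω‖ ^ 2) ∂volume ∂P
  intN_compensated : ∀ (A : Set (Marks l)), MeasurableSet A → lam A ≠ ∞ →
    ∀ s t : ℝ, 0 ≤ s → s ≤ t → ∀ᵐ ω ∂P,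
      intN (fun _ _ e => if e ∈ A then 1 else 0) s t ω
        = (pm ω (Set.Ioc s t ×ˢ A)).toReal - (t - s) * (lam A).toReal
  intN_martingale : ∀ V : ℝ → Ω → Marks l → ℝ,
    (∫⁻ ω, ∫⁻ s in Set.Icc 0 T, ∫⁻ e, ENNReal.ofReal ((V s ω e) ^ 2) ∂lam ∂volume ∂P ≠ ∞) →
    Martingale (fun t ω => intN V 0 t ω) F P
  intN_isometry : ∀ V : ℝ → Ω → Marks l → ℝ,
    (∫⁻ ω, ∫⁻ s in Set.Icc 0 T, ∫⁻ e, ENNReal.ofReal ((V s ω e) ^ 2) ∂lam ∂volume ∂P ≠ ∞) →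
    ∀ t ∈ Set.Icc 0 T,
      ∫⁻ ω, ENNReal.ofReal ((intN V 0 t ω) ^ 2) ∂P
        = ∫⁻ ω, ∫⁻ s in Set.Icc 0 t, ∫⁻ e, ENNReal.ofReal ((V s ω e) ^ 2) ∂lam ∂volume ∂P

variable {Ω : Type} [mΩ : MeasurableSpace Ω] {d l : ℕ}

/-- The predictable σ-algebra `𝒫` on `[0,T] × Ω` (generated by the predictable rectangles). -/
def predSigma (S : Setting Ω d l) : MeasurableSpace (ℝ × Ω) :=
  MeasurableSpace.generateFrom
    ({s | ∃ u v : ℝ, u < v ∧ ∃ A : Set Ω, MeasurableSet[S.F u] A ∧ s = Set.Ioc u v ×ˢ A} ∪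
     {s | ∃ A : Set Ω, MeasurableSet[S.F 0] A ∧ s = ({0} : Set ℝ) ×ˢ A})

/-- `𝒮²` : adapted rcll processes with square-integrable sup over `[0,T]`. -/
def MemS2 (S : Setting Ω d l) (Y : ℝ → Ω → ℝ) : Prop :=
  StronglyAdapted S.F Y ∧
  (∀ᵐ ω ∂S.P, RCLLOn (fun t => Y t ω) S.T) ∧
  ∫⁻ ω, (⨆ t : Set.Icc (0 : ℝ) S.T, ENNReal.ofReal |Y (t : ℝ) ω|) ^ 2 ∂S.P ≠ ∞

/-- `ℋ^{2,d}` : progressively measurable, `dt ⊗ dP`-square-integrable processes. -/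
def MemH2 (S : Setting Ω d l) (Z : ℝ → Ω → Fin d → ℝ) : Prop :=
  ProgMeasurable S.F Z ∧
  ∫⁻ ω, ∫⁻ s in Set.Icc 0 S.T, ENNReal.ofReal (‖Z s ω‖ ^ 2) ∂volume ∂S.P ≠ ∞

/-- `ℋ^d` : progressively measurable processes with `∫_0^T |Z_s|² ds < ∞` a.s. -/
def MemHloc (S : Setting Ω d l) (Z : ℝ → Ω → Fin d → ℝ) : Prop :=
  ProgMeasurable S.F Z ∧
  ∀ᵐ ω ∂S.P, ∫⁻ s in Set.Icc 0 S.T, ENNReal.ofReal (‖Z s ω‖ ^ 2) ∂volume ≠ ∞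

/-- scalar variant of `ℋ^{2,1}` for real-valued coefficients. -/
def MemH21 (S : Setting Ω d l) (g : ℝ → Ω → ℝ) : Prop :=
  ProgMeasurable S.F g ∧
  ∫⁻ ω, ∫⁻ s in Set.Icc 0 S.T, ENNReal.ofReal ((g s ω) ^ 2) ∂volume ∂S.P ≠ ∞

/-- `ℒ²` : predictable ⊗ ℰ-measurable random fields, square-integrable w.r.t.
`dt ⊗ dP ⊗ dλ`. -/
def MemL2 (S : Setting Ω d l) (V : ℝ → Ω → Marks l → ℝ) : Prop :=
  Measurable[(predSigma S).prod inferInstance]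
    (fun p : (ℝ × Ω) × Marks l => V p.1.1 p.1.2 p.2) ∧
  ∫⁻ ω, ∫⁻ s in Set.Icc 0 S.T, ∫⁻ e, ENNReal.ofReal ((V s ω e) ^ 2) ∂S.lam ∂volume ∂S.P ≠ ∞

/-- `ℒ` : predictable ⊗ ℰ-measurable random fields with a.s. finite `dt ⊗ dλ` square norm. -/
def MemLloc (S : Setting Ω d l) (V : ℝ → Ω → Marks l → ℝ) : Prop :=
  Measurable[(predSigma S).prod inferInstance]
    (fun p : (ℝ × Ω) × Marks l => V p.1.1 p.1.2 p.2) ∧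
  ∀ᵐ ω ∂S.P, ∫⁻ s in Set.Icc 0 S.T, ∫⁻ e, ENNReal.ofReal ((V s ω e) ^ 2) ∂S.lam ∂volume ≠ ∞

/-- `𝒜` : predictable rcll nondecreasing processes starting from 0 (a.s. finite at `T`). -/
def MemA (S : Setting Ω d l) (K : ℝ → Ω → ℝ) : Prop :=
  Measurable[predSigma S] (fun p : ℝ × Ω => K p.1 p.2) ∧
  ∀ᵐ ω ∂S.P, RCLLOn (fun t => K t ω) S.T ∧ K 0 ω = 0 ∧
    MonotoneOn (fun t => K t ω) (Set.Icc 0 S.T)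

/-- `𝒜²` : processes of `𝒜` with `E[K_T²] < ∞`. -/
def MemA2 (S : Setting Ω d l) (K : ℝ → Ω → ℝ) : Prop :=
  MemA S K ∧ ∫⁻ ω, ENNReal.ofReal ((K S.T ω) ^ 2) ∂S.P ≠ ∞

/-- A square-integrable `F_T`-measurable terminal condition. -/
def IsTerminal (S : Setting Ω d l) (ξ : Ω → ℝ) : Prop :=
  Measurable[S.F S.T] ξ ∧ ∫⁻ ω, ENNReal.ofReal ((ξ ω) ^ 2) ∂S.P ≠ ∞

/-- A uniformly Lipschitz generator `f(t,ω,y,z,v)` with `f(·,·,0,0,0) ∈ ℋ^{2,1}`. -/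
def IsLipschitzGenerator (S : Setting Ω d l)
    (f : ℝ → Ω → ℝ → (Fin d → ℝ) → (Marks l → ℝ) → ℝ) : Prop :=
  (∀ (y : ℝ) (z : Fin d → ℝ) (v : Marks l → ℝ),
      ProgMeasurable S.F (fun t ω => f t ω y z v)) ∧
  (∫⁻ ω, ∫⁻ s in Set.Icc 0 S.T, ENNReal.ofReal ((f s ω 0 0 0) ^ 2) ∂volume ∂S.P ≠ ∞) ∧
  ∃ C : ℝ, ∀ t ω y y' z z' v v',
    |f t ω y z v - f t ω y' z' v'| ≤
      C * (|y - y'| + ‖z - z'‖ + (eLpNorm (fun e => v e - v' e) 2 S.lam).toReal)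

/-- Barrier data for the doubly reflected equation: `L, U ∈ 𝒮²`, `L ≤ U` and
`L_T ≤ ξ ≤ U_T`. -/
def BarrierData (S : Setting Ω d l) (ξ : Ω → ℝ) (L U : ℝ → Ω → ℝ) : Prop :=
  MemS2 S L ∧ MemS2 S U ∧
  (∀ᵐ ω ∂S.P, ∀ t ∈ Set.Icc 0 S.T, L t ω ≤ U t ω) ∧
  (∀ᵐ ω ∂S.P, L S.T ω ≤ ξ ω ∧ ξ ω ≤ U S.T ω)

/-- Assumption [H] : the barriers and their left limits are completely separated. -/
def CompletelySeparated (S : Setting Ω d l) (L U : ℝ → Ω → ℝ) : Prop :=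
  ∀ᵐ ω ∂S.P, ∀ t ∈ Set.Icc 0 S.T, L t ω < U t ω ∧
    Function.leftLim (clamp S.T (fun r => L r ω)) t
      < Function.leftLim (clamp S.T (fun r => U r ω)) t

/-- Solution of the doubly reflected BSDE (2.2) associated with `(f,ξ,L,U)`. -/
structure IsDRSolution (S : Setting Ω d l)
    (f : ℝ → Ω → ℝ → (Fin d → ℝ) → (Marks l → ℝ) → ℝ)
    (ξ : Ω → ℝ) (L U : ℝ → Ω → ℝ)
    (Y : ℝ → Ω → ℝ) (Z : ℝ → Ω → Fin d → ℝ) (V : ℝ → Ω → Marks l → ℝ)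
    (Kp Km : ℝ → Ω → ℝ) : Prop where
  regY : MemS2 S Y
  regZ : MemHloc S Z
  regV : MemLloc S V
  regKp : MemA S Kp
  regKm : MemA S Km
  eqn : ∀ᵐ ω ∂S.P, ∀ t ∈ Set.Icc 0 S.T,
    Y t ω = ξ ω + (∫ s in Set.Icc t S.T, f s ω (Y s ω) (Z s ω) (V s ω))
      + (Kp S.T ω - Kp t ω) - (Km S.T ω - Km t ω)
      - S.intB Z t S.T ω - S.intN V t S.T ω
  barriers : ∀ᵐ ω ∂S.P, ∀ t ∈ Set.Icc 0 S.T, L t ω ≤ Y t ω ∧ Y t ω ≤ U t ω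
  skorokhod_plus : ∀ᵐ ω ∂S.P,
    ∫⁻ t in Set.Icc 0 S.T, ENNReal.ofReal (Y t ω - L t ω)
      ∂(lsMeasure (contPart (clamp S.T (fun r => Kp r ω)))) = 0
  skorokhod_minus : ∀ᵐ ω ∂S.P,
    ∫⁻ t in Set.Icc 0 S.T, ENNReal.ofReal (U t ω - Y t ω)
      ∂(lsMeasure (contPart (clamp S.T (fun r => Km r ω)))) = 0
  jumps_plus : ∀ᵐ ω ∂S.P, ∀ t ∈ Set.Icc 0 S.T,
    jumpPart (clamp S.T (fun r => Kp r ω)) t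
      = ∑' s : {s : ℝ // 0 < s ∧ s ≤ t},
          if jump (clamp S.T (fun r => L r ω)) (s : ℝ) < 0 then
            max (Function.leftLim (clamp S.T (fun r => L r ω)) (s : ℝ) - Y (s : ℝ) ω) 0
          else 0
  jumps_minus : ∀ᵐ ω ∂S.P, ∀ t ∈ Set.Icc 0 S.T,
    jumpPart (clamp S.T (fun r => Km r ω)) t
      = ∑' s : {s : ℝ // 0 < s ∧ s ≤ t},
          if 0 < jump (clamp S.T (fun r => U r ω)) (s : ℝ) then
            max (Y (s : ℝ) ω - Function.leftLim (clamp S.T (fun r => U r ω)) (s : ℝ)) 0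
          else 0

/-- Solution of the BSDE with one reflecting rcll upper barrier (2.3)
associated with `(f,ξ,U)`. -/
structure IsUpperSolution (S : Setting Ω d l)
    (f : ℝ → Ω → ℝ → (Fin d → ℝ) → (Marks l → ℝ) → ℝ)
    (ξ : Ω → ℝ) (U : ℝ → Ω → ℝ)
    (Y : ℝ → Ω → ℝ) (Z : ℝ → Ω → Fin d → ℝ) (V : ℝ → Ω → Marks l → ℝ)
    (K : ℝ → Ω → ℝ) : Prop where
  regY : MemS2 S Y
  regZ : MemH2 S Z
  regV : MemL2 S V
  regK : MemA2 S K
  eqn : ∀ᵐ ω ∂S.P, ∀ t ∈ Set.Icc 0 S.T,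
    Y t ω = ξ ω + (∫ s in Set.Icc t S.T, f s ω (Y s ω) (Z s ω) (V s ω))
      - (K S.T ω - K t ω) - S.intB Z t S.T ω - S.intN V t S.T ω
  barrier : ∀ᵐ ω ∂S.P, ∀ t ∈ Set.Icc 0 S.T, Y t ω ≤ U t ω
  skorokhod : ∀ᵐ ω ∂S.P,
    ∫⁻ t in Set.Icc 0 S.T, ENNReal.ofReal (U t ω - Y t ω)
      ∂(lsMeasure (contPart (clamp S.T (fun r => K r ω)))) = 0
  jumps : ∀ᵐ ω ∂S.P, ∀ t ∈ Set.Icc 0 S.T,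
    jump (clamp S.T (fun r => K r ω)) t
      = if 0 < jump (clamp S.T (fun r => U r ω)) t then
          max (Y t ω - Function.leftLim (clamp S.T (fun r => U r ω)) t) 0
        else 0

/-- Solution of the BSDE with one reflecting rcll lower barrier
associated with `(f,ξ,L)`. -/
structure IsLowerSolution (S : Setting Ω d l)
    (f : ℝ → Ω → ℝ → (Fin d → ℝ) → (Marks l → ℝ) → ℝ)
    (ξ : Ω → ℝ) (L : ℝ → Ω → ℝ)
    (Y : ℝ → Ω → ℝ) (Z : ℝ → Ω → Fin d → ℝ) (V : ℝ → Ω → Marks l → ℝ)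
    (K : ℝ → Ω → ℝ) : Prop where
  regY : MemS2 S Y
  regZ : MemH2 S Z
  regV : MemL2 S V
  regK : MemA2 S K
  eqn : ∀ᵐ ω ∂S.P, ∀ t ∈ Set.Icc 0 S.T,
    Y t ω = ξ ω + (∫ s in Set.Icc t S.T, f s ω (Y s ω) (Z s ω) (V s ω))
      + (K S.T ω - K t ω) - S.intB Z t S.T ω - S.intN V t S.T ω
  barrier : ∀ᵐ ω ∂S.P, ∀ t ∈ Set.Icc 0 S.T, L t ω ≤ Y t ω
  skorokhod : ∀ᵐ ω ∂S.P,
    ∫⁻ t in Set.Icc 0 S.T, ENNReal.ofReal (Y t ω - L t ω)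
      ∂(lsMeasure (contPart (clamp S.T (fun r => K r ω)))) = 0
  jumps : ∀ᵐ ω ∂S.P, ∀ t ∈ Set.Icc 0 S.T,
    jump (clamp S.T (fun r => K r ω)) t
      = max (Function.leftLim (clamp S.T (fun r => L r ω)) t - Y t ω) 0

/-- First time after `τ` at which a nondecreasing process `K` increases
(`= T` if it never does): `inf{s ≥ τ : K_s - K_τ > 0} ∧ T`. -/
def firstIncrease (S : Setting Ω d l) (K : ℝ → Ω → ℝ) (τ : Ω → ℝ) (ω : Ω) : ℝ :=
  sInf ({s : ℝ | τ ω ≤ s ∧ K (τ ω) ω < K s ω} ∪ {S.T})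

/-- A process is of class [D] : the family `{X_τ, τ stopping time with values in [0,T]}`
is uniformly integrable. -/
def ClassD (S : Setting Ω d l) (X : ℝ → Ω → ℝ) : Prop :=
  UniformIntegrable
    (fun τ : {τ : Ω → ℝ // IsStoppingTime S.F (fun ω => (τ ω : WithTop ℝ)) ∧ ∀ ω, τ ω ∈ Set.Icc 0 S.T} =>
      fun ω => X (τ.1 ω) ω) 1 S.P

/-- `SN` is the Snell envelope of `X` : the smallest rcll supermartingale of class [D]
dominating `X` on `[0,T]`. -/
def IsSnellEnvelope (S : Setting Ω d l) (X SN : ℝ → Ω → ℝ) : Prop :=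
  Supermartingale SN S.F S.P ∧
  (∀ᵐ ω ∂S.P, RCLLOn (fun t => SN t ω) S.T) ∧ ClassD S SN ∧
  (∀ᵐ ω ∂S.P, ∀ t ∈ Set.Icc 0 S.T, X t ω ≤ SN t ω) ∧
  ∀ W : ℝ → Ω → ℝ, Supermartingale W S.F S.P →
    (∀ᵐ ω ∂S.P, RCLLOn (fun t => W t ω) S.T) → ClassD S W →
    (∀ᵐ ω ∂S.P, ∀ t ∈ Set.Icc 0 S.T, X t ω ≤ W t ω) →
    ∀ᵐ ω ∂S.P, ∀ t ∈ Set.Icc 0 S.T, SN t ω ≤ W t ω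

/-- Uniqueness in the sense of Proposition 2.1 : any two solutions of the doubly
reflected BSDE associated with `(f,ξ,L,U)` have the same `Y`, `Z`, `V` and `K⁺ - K⁻`. -/
def UniqueDRSolution (S : Setting Ω d l)
    (f : ℝ → Ω → ℝ → (Fin d → ℝ) → (Marks l → ℝ) → ℝ)
    (ξ : Ω → ℝ) (L U : ℝ → Ω → ℝ) : Prop :=
  ∀ (Y Y' : ℝ → Ω → ℝ) (Z Z' : ℝ → Ω → Fin d → ℝ) (V V' : ℝ → Ω → Marks l → ℝ)
    (Kp Km Kp' Km' : ℝ → Ω → ℝ),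
    IsDRSolution S f ξ L U Y Z V Kp Km → IsDRSolution S f ξ L U Y' Z' V' Kp' Km' →
      (∀ᵐ ω ∂S.P, ∀ t ∈ Set.Icc 0 S.T,
        Y t ω = Y' t ω ∧ Kp t ω - Km t ω = Kp' t ω - Km' t ω) ∧
      (∀ᵐ ω ∂S.P, ∀ᵐ t ∂(volume.restrict (Set.Icc 0 S.T)),
        Z t ω = Z' t ω ∧ ∀ᵐ e ∂S.lam, V t ω e = V' t ω e)

/-- A generator `f(t,ω,y)` depending only on `y`, uniformly Lipschitz in `y`,
with `f(·,·,0) ∈ ℋ^{2,1}`. -/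
def IsLipschitzGeneratorY (S : Setting Ω d l) (f : ℝ → Ω → ℝ → ℝ) : Prop :=
  (∀ y : ℝ, ProgMeasurable S.F (fun t ω => f t ω y)) ∧
  (∫⁻ ω, ∫⁻ s in Set.Icc 0 S.T, ENNReal.ofReal ((f s ω 0) ^ 2) ∂volume ∂S.P ≠ ∞) ∧
  ∃ C : ℝ, ∀ t ω y y', |f t ω y - f t ω y'| ≤ C * |y - y'|


open scoped Topology

/-!
At a time `τ` with `θ_τ = τ < T` we also have `δ_τ = τ`, and neither touching property carries
a jump correction, so `U_τ ≤ Y_τ ≤ L_τ`, which [H] forbids. Hence if all `γ_n` were `< T` the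
sequence would increase strictly to some `t ∈ (0, T]`. Along it, `Y` lies above
`min(U, U_-)` at the times `δ_{γ_n}` and below `max(L, L_-)` at the times `γ_{n+1}`, and both
families of times increase to `t`; passing to the limit gives `U_{t-} ≤ Y_{t-} ≤ L_{t-}`,
which again contradicts [H].
-/

theorem StrictMono.tendsto_nhdsLT_ciSup {ι α : Type*} [PartialOrder ι] [NoMaxOrder ι]
    [ConditionallyCompleteLinearOrder α] [TopologicalSpace α] [OrderTopology α] {f : ι → α}
    (hf : StrictMono f) (hbdd : BddAbove (range f)) :
    Tendsto f atTop (𝓝[<] (⨆ i, f i)) := by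
  refine tendsto_nhdsWithin_iff.2 ⟨tendsto_atTop_ciSup hf.monotone hbdd, .of_forall fun i => ?_⟩
  obtain ⟨j, hij⟩ := exists_gt i
  exact (hf hij).trans_le (le_ciSup hbdd j)

theorem leftLim_le_leftLim_of_interleaved {α β : Type*} [LinearOrder α] [TopologicalSpace α]
    [OrderTopology α] [LinearOrder β] [TopologicalSpace β] [OrderTopology β]
    {y ℓ υ : α → β} {γ δ : ℕ → α} {t : α}
    (hγ : Tendsto γ atTop (𝓝[<] t)) (hγδ : ∀ n, γ n ≤ δ n ∧ δ n ≤ γ (n + 1))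
    (hy : ∃ a, Tendsto y (𝓝[<] t) (𝓝 a))
    (hℓ : Tendsto ℓ (𝓝[<] t) (𝓝 (leftLim ℓ t))) (hυ : Tendsto υ (𝓝[<] t) (𝓝 (leftLim υ t)))
    (hbelow : ∀ n, y (γ (n + 1)) ≤ max (ℓ (γ (n + 1))) (leftLim ℓ (γ (n + 1))))
    (habove : ∀ n, min (υ (δ n)) (leftLim υ (δ n)) ≤ y (δ n)) :
    leftLim υ t ≤ leftLim ℓ t := by
  obtain ⟨a, hy⟩ := hy
  have hγ' : Tendsto (fun n => γ (n + 1)) atTop (𝓝[<] t) := hγ.comp (tendsto_add_atTop_nat 1)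
  have hδ : Tendsto δ atTop (𝓝[<] t) := by
    refine tendsto_nhdsWithin_iff.2 ⟨tendsto_of_tendsto_of_tendsto_of_le_of_le
      (tendsto_nhds_of_tendsto_nhdsWithin hγ) (tendsto_nhds_of_tendsto_nhdsWithin hγ')
      (fun n => (hγδ n).1) (fun n => (hγδ n).2), ?_⟩
    filter_upwards [tendsto_nhdsWithin_iff.1 hγ' |>.2] with n hn using (hγδ n).2.trans_lt hn
  have hℓ' := (continuousWithinAt_leftLim_Iic hℓ).tendsto.mono_left
    (nhdsWithin_mono t Iio_subset_Iic_self)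
  have hυ' := (continuousWithinAt_leftLim_Iic hυ).tendsto.mono_left
    (nhdsWithin_mono t Iio_subset_Iic_self)
  have hya : a ≤ leftLim ℓ t := le_of_tendsto_of_tendsto' (hy.comp hγ')
    (by simpa only [max_self, Function.comp_def] using (hℓ.max hℓ').comp hγ') hbelow
  have hay : leftLim υ t ≤ a := le_of_tendsto_of_tendsto'
    (by simpa only [min_self, Function.comp_def] using (hυ.min hυ').comp hδ) (hy.comp hδ) habove
  exact hay.trans hya

theorem clamp_of_mem_Icc {T s : ℝ} (f : ℝ → ℝ) (hs : s ∈ Icc 0 T) : clamp T f s = f s := by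
  rw [clamp, min_eq_left hs.2, max_eq_right hs.1]

theorem RCLLOn.tendsto_clamp_leftLim {f : ℝ → ℝ} {T t : ℝ} (hf : RCLLOn f T)
    (ht : t ∈ Ioc 0 T) : Tendsto (clamp T f) (𝓝[<] t) (𝓝 (leftLim (clamp T f) t)) := by
  obtain ⟨c, hc⟩ := hf.2 t ht
  refine tendsto_leftLim_of_tendsto ⟨c, hc.congr' ?_⟩
  filter_upwards [Ioo_mem_nhdsLT ht.1] with s hs
  exact (clamp_of_mem_Icc f ⟨hs.1.le, hs.2.le.trans ht.2⟩).symm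

theorem le_max_leftLim_of_le_add_jump {f : ℝ → ℝ} {T s x : ℝ} {p : Prop} [Decidable p]
    (hs : s ∈ Icc 0 T) (h : x ≤ f s + if p then max (-(jump (clamp T f) s)) 0 else 0) :
    x ≤ max (clamp T f s) (leftLim (clamp T f) s) := by
  rw [jump] at h
  rw [clamp_of_mem_Icc f hs] at h ⊢
  split_ifs at h <;> grind

theorem min_leftLim_le_of_sub_jump_le {f : ℝ → ℝ} {T s x : ℝ} {p : Prop} [Decidable p]
    (hs : s ∈ Icc 0 T) (h : f s - (if p then max (jump (clamp T f) s) 0 else 0) ≤ x) :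
    min (clamp T f s) (leftLim (clamp T f) s) ≤ x := by
  rw [jump] at h
  rw [clamp_of_mem_Icc f hs] at h ⊢
  split_ifs at h <;> grind

section Pathwise

variable {T : ℝ} {y L U : ℝ → ℝ}

theorem lt_of_touching {τ δ θ : ℝ} (hsep : L τ < U τ) (hτδ : τ ≤ δ) (hδθ : δ ≤ θ)
    (habove : δ < T → U δ - (if τ < δ then max (jump (clamp T U) δ) 0 else 0) ≤ y δ)
    (hbelow : θ < T → y θ ≤ L θ + (if δ < θ then max (-(jump (clamp T L) θ)) 0 else 0))
    (hθ : θ < T) : τ < θ := by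
  refine (hτδ.trans hδθ).lt_of_ne fun hτθ => ?_
  subst hτθ
  obtain rfl : δ = τ := le_antisymm hδθ hτδ
  have hU := habove hθ
  have hL := hbelow hθ
  simp only [lt_irrefl, if_false, sub_zero, add_zero] at hU hL
  linarith

theorem not_forall_lt_of_touching {γ δ : ℕ → ℝ} (hy : RCLLOn y T) (hL : RCLLOn L T)
    (hU : RCLLOn U T)
    (hsep : ∀ t ∈ Icc 0 T, L t < U t ∧ leftLim (clamp T L) t < leftLim (clamp T U) t)
    (hγ0 : γ 0 = 0) (hγδ : ∀ n, γ n ≤ δ n ∧ δ n ≤ γ (n + 1) ∧ γ (n + 1) ≤ T)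
    (habove : ∀ n, δ n < T →
      U (δ n) - (if γ n < δ n then max (jump (clamp T U) (δ n)) 0 else 0) ≤ y (δ n))
    (hbelow : ∀ n, γ (n + 1) < T → y (γ (n + 1)) ≤ L (γ (n + 1)) +
      (if δ n < γ (n + 1) then max (-(jump (clamp T L) (γ (n + 1)))) 0 else 0)) :
    ¬ ∀ n, 1 ≤ n → γ n < T := by
  intro hlt
  have hlt' : ∀ n, γ (n + 1) < T := fun n => hlt (n + 1) n.succ_pos
  have hmem : ∀ n, γ n ∈ Icc 0 T := fun n =>
    ⟨hγ0 ▸ monotone_nat_of_le_succ (fun k => (hγδ k).1.trans (hγδ k).2.1) (Nat.zero_le n),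
      (hγδ n).1.trans ((hγδ n).2.1.trans (hγδ n).2.2)⟩
  have hδmem : ∀ n, δ n ∈ Icc 0 T := fun n =>
    ⟨(hmem n).1.trans (hγδ n).1, (hγδ n).2.1.trans (hγδ n).2.2⟩
  have hγ : StrictMono γ := strictMono_nat_of_lt_succ fun n =>
    lt_of_touching (hsep (γ n) (hmem n)).1 (hγδ n).1 (hγδ n).2.1 (habove n) (hbelow n) (hlt' n)
  have hbdd : BddAbove (range γ) := ⟨T, forall_mem_range.2 fun n => (hmem n).2⟩
  have ht : (⨆ n, γ n) ∈ Ioc 0 T :=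
    ⟨hγ0 ▸ (hγ zero_lt_one).trans_le (le_ciSup hbdd 1), ciSup_le fun n => (hmem n).2⟩
  have hUL := leftLim_le_leftLim_of_interleaved (y := y) (ℓ := clamp T L) (υ := clamp T U)
    (StrictMono.tendsto_nhdsLT_ciSup hγ hbdd)
    (fun n => ⟨(hγδ n).1, (hγδ n).2.1⟩) (hy.2 _ ht) (hL.tendsto_clamp_leftLim ht)
    (hU.tendsto_clamp_leftLim ht)
    (fun n => le_max_leftLim_of_le_add_jump (hmem (n + 1)) (hbelow n (hlt' n)))
    (fun n => min_leftLim_le_of_sub_jump_le (hδmem n)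
      (habove n ((hγδ n).2.1.trans_lt (hlt' n))))
  exact (hsep _ (Ioc_subset_Icc_self ht)).2.not_ge hUL

end Pathwise

theorem isStoppingTime_iterate {F : Filtration ℝ mΩ} {T : ℝ} (hT : 0 ≤ T)
    {θ : (Ω → ℝ) → Ω → ℝ}
    (hθ : ∀ τ : Ω → ℝ, IsStoppingTime F (fun ω => (τ ω : WithTop ℝ)) → (∀ ω, τ ω ∈ Icc 0 T) →
      IsStoppingTime F (fun ω => (θ τ ω : WithTop ℝ)) ∧ ∀ ω, τ ω ≤ θ τ ω ∧ θ τ ω ≤ T)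
    {γ : ℕ → Ω → ℝ} (hγ0 : γ 0 = fun _ => 0) (hγs : ∀ n, γ (n + 1) = θ (γ n)) (n : ℕ) :
    IsStoppingTime F (fun ω => (γ n ω : WithTop ℝ)) ∧ ∀ ω, γ n ω ∈ Icc 0 T := by
  induction n with
  | zero =>
    simp only [hγ0]
    exact ⟨isStoppingTime_const F 0, fun _ => ⟨le_rfl, hT⟩⟩
  | succ n ih =>
    obtain ⟨hθγ, hγθ⟩ := hθ (γ n) ih.1 ih.2
    rw [hγs n]
    exact ⟨hθγ, fun ω => ⟨(ih.2 ω).1.trans (hγθ ω).1, (hγθ ω).2⟩⟩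

theorem gamma_sequence_stationary_general (S : Setting Ω d l)
    (g : ℝ → Ω → ℝ)
    (ξ : Ω → ℝ)
    (L U : ℝ → Ω → ℝ) (hLU : BarrierData S ξ L U)
    (hsep : CompletelySeparated S L U)
    (Y : ℝ → Ω → ℝ)
    (hYrcll : ∀ᵐ ω ∂S.P, RCLLOn (fun t => Y t ω) S.T)
    (θ δ : (Ω → ℝ) → Ω → ℝ)
    (hBL : ∀ τ : Ω → ℝ, IsStoppingTime S.F (fun ω => (τ ω : WithTop ℝ)) → (∀ ω, τ ω ∈ Set.Icc 0 S.T) →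
      IsStoppingTime S.F (fun ω => (θ τ ω : WithTop ℝ)) ∧
      IsStoppingTime S.F (fun ω => (δ τ ω : WithTop ℝ)) ∧
      (∀ ω, τ ω ≤ δ τ ω ∧ δ τ ω ≤ θ τ ω ∧ θ τ ω ≤ S.T) ∧
      (∃ (Zτ : ℝ → Ω → Fin d → ℝ) (Vτ : ℝ → Ω → Marks l → ℝ) (Kp Km : ℝ → Ω → ℝ),
        MemH2 S Zτ ∧ MemL2 S Vτ ∧ MemA2 S Kp ∧ MemA2 S Km ∧
        (∀ᵐ ω ∂S.P, Kp (τ ω) ω = 0 ∧ Km (τ ω) ω = 0) ∧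
        (∀ᵐ ω ∂S.P, ∀ t ∈ Set.Icc (τ ω) (θ τ ω),
          Y t ω = Y (θ τ ω) ω + (∫ s in Set.Icc t (θ τ ω), g s ω)
            + (Kp (θ τ ω) ω - Kp t ω) - (Km (θ τ ω) ω - Km t ω)
            - S.intB Zτ t (θ τ ω) ω - S.intN Vτ t (θ τ ω) ω) ∧
        (∀ᵐ ω ∂S.P,
          (∫⁻ t in Set.Icc (τ ω) (θ τ ω), ENNReal.ofReal (U t ω - Y t ω)
            ∂(lsMeasure (contPart (clamp S.T (fun r => Km r ω)))) = 0) ∧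
          (∫⁻ t in Set.Icc (τ ω) (θ τ ω), ENNReal.ofReal (Y t ω - L t ω)
            ∂(lsMeasure (contPart (clamp S.T (fun r => Kp r ω)))) = 0)) ∧
        (∀ᵐ ω ∂S.P, ∀ t ∈ Set.Icc (τ ω) (θ τ ω),
          jumpPart (clamp S.T (fun r => Kp r ω)) t
            = (∑' s : {s : ℝ // τ ω < s ∧ s ≤ t},
                max (Function.leftLim (clamp S.T (fun r => L r ω)) (s : ℝ)
                  - Y (s : ℝ) ω) 0) ∧
          jumpPart (clamp S.T (fun r => Km r ω)) t
            = ∑' s : {s : ℝ // τ ω < s ∧ s ≤ t},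
                max (Y (s : ℝ) ω
                  - Function.leftLim (clamp S.T (fun r => U r ω)) (s : ℝ)) 0)) ∧
      -- the touching properties of Corollary 3.1 at `δ_τ` and `θ_τ = λ_{δ_τ}`
      (∀ᵐ ω ∂S.P, δ τ ω < S.T →
        U (δ τ ω) ω
          - (if τ ω < δ τ ω then
              max (jump (clamp S.T (fun r => U r ω)) (δ τ ω)) 0 else 0)
        ≤ Y (δ τ ω) ω) ∧
      (∀ᵐ ω ∂S.P, θ τ ω < S.T →
        Y (θ τ ω) ω ≤ L (θ τ ω) ω
          + (if δ τ ω < θ τ ω then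
              max (-(jump (clamp S.T (fun r => L r ω)) (θ τ ω))) 0 else 0)))
    (γ : ℕ → Ω → ℝ) (hγ0 : γ 0 = fun _ => 0) (hγs : ∀ n : ℕ, γ (n + 1) = θ (γ n)) :
    (∀ n : ℕ, S.P {ω | γ n ω = γ (n + 1) ω ∧ γ (n + 1) ω < S.T} = 0) ∧
    S.P {ω | ∀ n : ℕ, 1 ≤ n → γ n ω < S.T} = 0 := by
  have hST := isStoppingTime_iterate S.hT.le (fun τ hτ hτT =>
    have hτθ := (hBL τ hτ hτT).2.2.1
    ⟨(hBL τ hτ hτT).1, fun ω => ⟨(hτθ ω).1.trans (hτθ ω).2.1, (hτθ ω).2.2⟩⟩) hγ0 hγs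
  have hBLγ := fun n => hBL (γ n) (hST n).1 (hST n).2
  simp only [← hγs] at hBLγ
  have htouch := ae_all_iff.2 fun n => (hBLγ n).2.2.2.2.1.and (hBLγ n).2.2.2.2.2
  have key : ∀ᵐ ω ∂S.P, (∀ n, ¬(γ n ω = γ (n + 1) ω ∧ γ (n + 1) ω < S.T)) ∧
      ¬ ∀ n, 1 ≤ n → γ n ω < S.T := by
    filter_upwards [hsep, hYrcll, hLU.1.2.1, hLU.2.1.2.1, htouch] with ω hsepω hy hL hU hω
    have hγδ := fun n => (hBLγ n).2.2.1 ω
    refine ⟨fun n h => ?_, not_forall_lt_of_touching hy hL hU hsepω (congrFun hγ0 ω) hγδ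
      (fun n => (hω n).1) (fun n => (hω n).2)⟩
    exact (lt_of_touching (y := fun t => Y t ω) (L := fun t => L t ω) (U := fun t => U t ω)
      (hsepω _ ((hST n).2 ω)).1 (hγδ n).1 (hγδ n).2.1 (hω n).1 (hω n).2 h.2).ne h.1
  exact ⟨fun n => measure_eq_zero_iff_ae_notMem.2 (key.mono fun ω h => h.1 n),
    measure_eq_zero_iff_ae_notMem.2 (key.mono fun ω h => h.2)⟩

/-- Stationarity of the iterated local-solution times: under [H], with
`γ₀ = 0` and `γ_n = θ_{γ_{n-1}}` where `θ_τ` is the stopping time of the local solution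
`𝓑𝓛(ξ,g,L,U)` (constructed through the intermediate time `δ_τ`, so that `Y` is above
`U - (ΔU)⁺` at `δ_τ` and below `L + (ΔL)⁻` at `θ_τ` before `T`), one has
`P[(γ_{n-1} = γ_n) ∩ (γ_n < T)] = 0` for every `n ≥ 1` and the sequence `(γ_n)` is of
stationary type : `P[γ_n < T, ∀ n ≥ 1] = 0`. -/
theorem gamma_sequence_stationary (S : Setting Ω d l)
    (g : ℝ → Ω → ℝ) (hg : MemH21 S g)
    (ξ : Ω → ℝ) (hξ : IsTerminal S ξ)
    (L U : ℝ → Ω → ℝ) (hLU : BarrierData S ξ L U)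
    (hsep : CompletelySeparated S L U)
    (Y : ℝ → Ω → ℝ)
    (hYprog : ProgMeasurable S.F Y)
    (hYrcll : ∀ᵐ ω ∂S.P, RCLLOn (fun t => Y t ω) S.T)
    (hYT : ∀ᵐ ω ∂S.P, Y S.T ω = ξ ω)
    (hYbar : ∀ᵐ ω ∂S.P, ∀ t ∈ Set.Icc 0 S.T, L t ω ≤ Y t ω ∧ Y t ω ≤ U t ω)
    (θ δ : (Ω → ℝ) → Ω → ℝ)
    (hBL : ∀ τ : Ω → ℝ, IsStoppingTime S.F (fun ω => (τ ω : WithTop ℝ)) → (∀ ω, τ ω ∈ Set.Icc 0 S.T) →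
      IsStoppingTime S.F (fun ω => (θ τ ω : WithTop ℝ)) ∧
      IsStoppingTime S.F (fun ω => (δ τ ω : WithTop ℝ)) ∧
      (∀ ω, τ ω ≤ δ τ ω ∧ δ τ ω ≤ θ τ ω ∧ θ τ ω ≤ S.T) ∧
      (∃ (Zτ : ℝ → Ω → Fin d → ℝ) (Vτ : ℝ → Ω → Marks l → ℝ) (Kp Km : ℝ → Ω → ℝ),
        MemH2 S Zτ ∧ MemL2 S Vτ ∧ MemA2 S Kp ∧ MemA2 S Km ∧
        (∀ᵐ ω ∂S.P, Kp (τ ω) ω = 0 ∧ Km (τ ω) ω = 0) ∧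
        (∀ᵐ ω ∂S.P, ∀ t ∈ Set.Icc (τ ω) (θ τ ω),
          Y t ω = Y (θ τ ω) ω + (∫ s in Set.Icc t (θ τ ω), g s ω)
            + (Kp (θ τ ω) ω - Kp t ω) - (Km (θ τ ω) ω - Km t ω)
            - S.intB Zτ t (θ τ ω) ω - S.intN Vτ t (θ τ ω) ω) ∧
        (∀ᵐ ω ∂S.P,
          (∫⁻ t in Set.Icc (τ ω) (θ τ ω), ENNReal.ofReal (U t ω - Y t ω)
            ∂(lsMeasure (contPart (clamp S.T (fun r => Km r ω)))) = 0) ∧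
          (∫⁻ t in Set.Icc (τ ω) (θ τ ω), ENNReal.ofReal (Y t ω - L t ω)
            ∂(lsMeasure (contPart (clamp S.T (fun r => Kp r ω)))) = 0)) ∧
        (∀ᵐ ω ∂S.P, ∀ t ∈ Set.Icc (τ ω) (θ τ ω),
          jumpPart (clamp S.T (fun r => Kp r ω)) t
            = (∑' s : {s : ℝ // τ ω < s ∧ s ≤ t},
                max (Function.leftLim (clamp S.T (fun r => L r ω)) (s : ℝ)
                  - Y (s : ℝ) ω) 0) ∧
          jumpPart (clamp S.T (fun r => Km r ω)) t
            = ∑' s : {s : ℝ // τ ω < s ∧ s ≤ t},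
                max (Y (s : ℝ) ω
                  - Function.leftLim (clamp S.T (fun r => U r ω)) (s : ℝ)) 0)) ∧
      -- the touching properties of Corollary 3.1 at `δ_τ` and `θ_τ = λ_{δ_τ}`
      (∀ᵐ ω ∂S.P, δ τ ω < S.T →
        U (δ τ ω) ω
          - (if τ ω < δ τ ω then
              max (jump (clamp S.T (fun r => U r ω)) (δ τ ω)) 0 else 0)
        ≤ Y (δ τ ω) ω) ∧
      (∀ᵐ ω ∂S.P, θ τ ω < S.T →
        Y (θ τ ω) ω ≤ L (θ τ ω) ω
          + (if δ τ ω < θ τ ω then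
              max (-(jump (clamp S.T (fun r => L r ω)) (θ τ ω))) 0 else 0)))
    (γ : ℕ → Ω → ℝ) (hγ0 : γ 0 = fun _ => 0) (hγs : ∀ n : ℕ, γ (n + 1) = θ (γ n)) :
    (∀ n : ℕ, S.P {ω | γ n ω = γ (n + 1) ω ∧ γ (n + 1) ω < S.T} = 0) ∧
    S.P {ω | ∀ n : ℕ, 1 ≤ n → γ n ω < S.T} = 0 :=
  gamma_sequence_stationary_general S g ξ L U hLU hsep Y hYrcll θ δ hBL γ hγ0 hγs

end DRBSDE
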